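/- arXiv:1811.08755 — 2 statements merged into one kernel-verified Lean document; each statement's English description precedes it below -/
import Mathlib

section
/- Let A be a commutative ring, d : A → A a derivation, and f_1, …, f_N ∈ A. For a ∈ A let m_a : A → A denote the multiplication operator x ↦ a·x, and define W_k := e_k(d + m_{f_1}, …, d + m_{f_N})(1) ∈ A for k = 0, …, N, where e_k is the k-th noncommutative elementary symmetric polynomial computed in the ring of additive endomorphisms of A. Then for every additive endomorphism D : A → A satisfying D ∘ m_a − m_a ∘ D = m_{d(a)} for all a ∈ A, one has the identity of endomorphisms (D + m_{f_N})(D + m_{f_{N-1}}) ⋯ (D + m_{f_1}) = ∑_{k=0}^{N} m_{W_k} ∘ D^{N-k}. (This is the factorization identity ∑_m ζ_m ∂^{N-m} = (∂ + μ_{N(-1)}) ⋯ (∂ + μ_{1(-1)}) together with ζ_m = W_{m(-1)}, established in the proof of Lemma 4.3 of the paper, stated for an arbitrary operator D with the same commutation relations with multiplication operators as the derivation d.) -/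
/-!
Write `X_i = D + m_{f_i}` and `Y_i = d + m_{f_i}`. The commutation rule gives
`X_i ∘ m_w = m_w ∘ D + m_{Y_i w}`, so multiplying `∑_{i+j=n} m_{W_i} ∘ D^j` on the left by `X_{n+1}`
produces `∑_{i+j=n+1} m_{W'_i} ∘ D^j` with `W'_{i+1} = W_{i+1} + Y_{n+1} W_i`, which is exactly the
recursion `e_{i+1}(Y_1, …, Y_{n+1}) = e_{i+1}(Y_1, …, Y_n) + Y_{n+1} e_i(Y_1, …, Y_n)`.
-/

/-- The `m`-th noncommutative elementary symmetric polynomial of the list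
`[X_1, …, X_n]`: the sum over `n ≥ i_1 > i_2 > … > i_m ≥ 1` of
`X_{i_1} X_{i_2} ⋯ X_{i_m}` (factors in strictly decreasing order of index),
with `e_0 = 1`. -/
def ncE {R : Type*} [Semiring R] : ℕ → List R → R
  | 0, _ => 1
  | _ + 1, [] => 0
  | m + 1, x :: xs => ncE (m + 1) xs + ncE m xs * x

/-- The multiplication operator `x ↦ a * x`, as an additive endomorphism. -/
def mulEnd {A : Type*} [NonUnitalNonAssocSemiring A] (a : A) : AddMonoid.End A :=
  AddMonoidHom.mulLeft a

open Finset

section ncE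

variable {R : Type*} [Semiring R]

@[simp]
lemma ncE_zero (xs : List R) : ncE 0 xs = 1 := by
  cases xs <;> rfl

lemma ncE_of_length_lt {m : ℕ} {xs : List R} (h : xs.length < m) : ncE m xs = 0 := by
  induction xs generalizing m with
  | nil => obtain ⟨m, rfl⟩ := Nat.exists_eq_add_one_of_ne_zero (by omega : m ≠ 0); rfl
  | cons x xs ih =>
    obtain ⟨m, rfl⟩ := Nat.exists_eq_add_one_of_ne_zero (by omega : m ≠ 0)
    simp only [List.length_cons] at h
    rw [ncE, ih (by omega), ih (by omega), zero_mul, add_zero]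

lemma ncE_succ_append_singleton (m : ℕ) (xs : List R) (y : R) :
    ncE (m + 1) (xs ++ [y]) = ncE (m + 1) xs + y * ncE m xs := by
  induction xs generalizing m with
  | nil => cases m <;> simp [ncE]
  | cons x xs ih =>
    cases m with
    | zero => simp only [List.cons_append, ncE, ih, ncE_zero]; noncomm_ring
    | succ m => simp only [List.cons_append, ncE, ih]; noncomm_ring

end ncE

section mulEnd

variable {A : Type*} [Semiring A]

@[simp] lemma AddMonoid.End.add_apply (f g : AddMonoid.End A) (x : A) : (f + g) x = f x + g x := rfl

@[simp] lemma mulEnd_apply (a x : A) : mulEnd a x = a * x := rfl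

@[simp] lemma mulEnd_zero : mulEnd (0 : A) = 0 := by ext; simp

@[simp] lemma mulEnd_one : mulEnd (1 : A) = 1 := by ext; simp

lemma mulEnd_add (a b : A) : mulEnd (a + b) = mulEnd a + mulEnd b := by ext; simp [add_mul]

lemma mulEnd_mul (a b : A) : mulEnd (a * b) = mulEnd a * mulEnd b := by ext; simp [mul_assoc]

variable {d D : AddMonoid.End A} (hD : ∀ a : A, D * mulEnd a = mulEnd a * D + mulEnd (d a))
include hD

lemma add_mulEnd_mul_mulEnd_mul_pow (b w : A) (j : ℕ) :
    (D + mulEnd b) * (mulEnd w * D ^ j)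
      = mulEnd w * D ^ (j + 1) + mulEnd ((d + mulEnd b) w) * D ^ j := by
  rw [add_mul, ← mul_assoc, ← mul_assoc, hD, ← mulEnd_mul, AddMonoid.End.add_apply, mulEnd_apply,
    mulEnd_add, pow_succ', add_mul, add_mul, mul_assoc, add_assoc]

lemma add_mulEnd_mul_sum_antidiagonal_ncE (b : A) (Ys : List (AddMonoid.End A)) :
    (D + mulEnd b) * ∑ p ∈ antidiagonal Ys.length, mulEnd (ncE p.1 Ys 1) * D ^ p.2
      = ∑ p ∈ antidiagonal (Ys.length + 1),
          mulEnd (ncE p.1 (Ys ++ [d + mulEnd b]) 1) * D ^ p.2 := by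
  set Y := d + mulEnd b
  have top_vanishes : ncE (Ys.length + 1) Ys = 0 := ncE_of_length_lt (Nat.lt_succ_self _)
  have coeff_succ (k : ℕ) : ncE (k + 1) (Ys ++ [Y]) 1 = ncE (k + 1) Ys 1 + Y (ncE k Ys 1) := by
    rw [ncE_succ_append_singleton]; rfl
  calc (D + mulEnd b) * ∑ p ∈ antidiagonal Ys.length, mulEnd (ncE p.1 Ys 1) * D ^ p.2
      = ∑ p ∈ antidiagonal Ys.length, mulEnd (ncE p.1 Ys 1) * D ^ (p.2 + 1)
          + ∑ p ∈ antidiagonal Ys.length, mulEnd (Y (ncE p.1 Ys 1)) * D ^ p.2 := by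
        rw [mul_sum, ← sum_add_distrib]
        exact sum_congr rfl fun p _ => add_mulEnd_mul_mulEnd_mul_pow hD b _ p.2
    _ = ∑ p ∈ antidiagonal (Ys.length + 1), mulEnd (ncE p.1 Ys 1) * D ^ p.2
          + ∑ p ∈ antidiagonal Ys.length, mulEnd (Y (ncE p.1 Ys 1)) * D ^ p.2 := by
        rw [Nat.sum_antidiagonal_succ' (f := fun p => mulEnd (ncE p.1 Ys 1) * D ^ p.2),
          top_vanishes]
        simp
    _ = ∑ p ∈ antidiagonal (Ys.length + 1), mulEnd (ncE p.1 (Ys ++ [Y]) 1) * D ^ p.2 := by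
        simp only [Nat.sum_antidiagonal_succ, coeff_succ, ncE_zero, mulEnd_add, add_mul,
          sum_add_distrib, add_assoc]

lemma prod_reverse_map_add_mulEnd (g : List A) :
    ((g.map (D + mulEnd ·)).reverse).prod
      = ∑ p ∈ antidiagonal g.length, mulEnd (ncE p.1 (g.map (d + mulEnd ·)) 1) * D ^ p.2 := by
  induction g using List.reverseRecOn with
  | nil => simp
  | append_singleton g b ih =>
    simpa [ih] using add_mulEnd_mul_sum_antidiagonal_ncE hD b (g.map (d + mulEnd ·))

end mulEnd

theorem stmt5_general {A : Type*} [CommRing A] (N : ℕ) (d : AddMonoid.End A)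
    (f : Fin N → A) (D : AddMonoid.End A)
    (hD : ∀ a : A, D * mulEnd a - mulEnd a * D = mulEnd (d a)) :
    ((List.ofFn fun i => D + mulEnd (f i)).reverse).prod
      = ∑ k ∈ Finset.range (N + 1),
          mulEnd ((ncE k (List.ofFn fun i => d + mulEnd (f i))) (1 : A)) * D ^ (N - k) := by
  have hD' (a : A) : D * mulEnd a = mulEnd a * D + mulEnd (d a) := by
    rw [← hD, add_sub_cancel]
  have expansion := prod_reverse_map_add_mulEnd hD' (List.ofFn f)
  rw [List.length_ofFn, Nat.sum_antidiagonal_eq_sum_range_succ_mk] at expansion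
  simpa only [List.map_ofFn, Function.comp_def] using expansion

/-- The factorization identity from the proof of Lemma 4.3: with
`W_k := e_k(d + m_{f_1}, …, d + m_{f_N})(1)`, for any additive endomorphism `D`
with `D ∘ m_a − m_a ∘ D = m_{d(a)}`, one has
`(D + m_{f_N}) ⋯ (D + m_{f_1}) = ∑_{k=0}^{N} m_{W_k} ∘ D^{N-k}`. -/
theorem stmt5 {A : Type*} [CommRing A] (N : ℕ) (d : AddMonoid.End A)
    (hd : ∀ a : A, d * mulEnd a - mulEnd a * d = mulEnd (d a))
    (f : Fin N → A) (D : AddMonoid.End A)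
    (hD : ∀ a : A, D * mulEnd a - mulEnd a * D = mulEnd (d a)) :
    ((List.ofFn fun i => D + mulEnd (f i)).reverse).prod
      = ∑ k ∈ Finset.range (N + 1),
          mulEnd ((ncE k (List.ofFn fun i => d + mulEnd (f i))) (1 : A)) * D ^ (N - k) :=
  stmt5_general N d f D hD
end

section
/- Let M be a module over ℂ, let (A_n)_{n ∈ ℤ} be a family of ℂ-linear endomorphisms of M, and let r_1, …, r_N be ℂ-linear endomorphisms of M such that A_n ∘ r_i − r_i ∘ A_n = −(n+1)·A_{n-1} for all n ∈ ℤ and all i = 1, …, N. Let v ∈ M satisfy A_n(v) = 0 for all n ≥ 0. Then for every m with 1 ≤ m ≤ N+1: A_{N-m}(r_N r_{N-1} ⋯ r_1 (v)) = (-1)^{N-m+1} · (N-m+1)! · e_{m-1}(r_1, …, r_N)(A_{-1}(v)). (This is the mode computation underlying the proof of Theorem 4.4 of the paper, abstracted from the commutation relation [e^{∫Y}_{(n)}, R_i] = −(n+1) e^{∫Y}_{(n-1)} of Lemma 4.1 and the vanishing e^{∫Y}_{(n)} e^{−∫Y} = 0 for n ≥ 0.) -/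
open Finset Finset.Nat Polynomial

theorem ncE_eq_zero_of_length_lt {R : Type*} [Semiring R] :
    ∀ {m : ℕ} {L : List R}, L.length < m → ncE m L = 0
  | m + 1, [], _ => rfl
  | m + 1, x :: xs, h => by
    simp only [List.length_cons] at h
    simp only [ncE, ncE_eq_zero_of_length_lt (by omega : xs.length < m + 1),
      ncE_eq_zero_of_length_lt (by omega : xs.length < m), zero_mul, add_zero]

section ModeExpansion

variable {K R : Type*} [CommRing K] [Ring R] [Algebra K R]

theorem mul_prod_reverse_eq_sum_antidiagonal (A : ℤ → R) (L : List R)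
    (hL : ∀ x ∈ L, ∀ k : ℤ, A k * x - x * A k = (-((k : K) + 1)) • A (k - 1)) (n : ℤ) :
    A n * L.reverse.prod = ∑ p ∈ antidiagonal L.length,
      (ascPochhammer K p.2).eval (-((n : K) + 1)) • (ncE p.1 L * A (n - p.2)) := by
  induction L with
  | nil => simp [ncE]
  | cons x xs ih =>
    set c : ℕ → K := fun d ↦ (ascPochhammer K d).eval (-((n : K) + 1))
    set f : ℕ × ℕ → R := fun p ↦ c p.2 • (ncE p.1 xs * A (n - p.2))
    have hx : ∀ k : ℤ, A k * x = x * A k + (-((k : K) + 1)) • A (k - 1) := fun k ↦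
      sub_eq_iff_eq_add'.mp (hL x List.mem_cons_self k)
    -- both sides are the sum of `f` over `antidiagonal (xs.length + 1)`
    have hshift : ∑ p ∈ antidiagonal xs.length, f (p.1, p.2 + 1) =
        f (0, xs.length + 1) + ∑ p ∈ antidiagonal xs.length, f (p.1 + 1, p.2) := by
      have hf : f (xs.length + 1, 0) = 0 := by
        simp only [f, ncE_eq_zero_of_length_lt (Nat.lt_succ_self _), zero_mul, smul_zero]
      rw [← sum_antidiagonal_succ, sum_antidiagonal_succ', hf, zero_add]
    have hlower : ∀ p : ℕ × ℕ,
        c p.2 • (ncE p.1 xs * (-(((n - p.2 : ℤ) : K) + 1)) • A (n - p.2 - 1)) =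
          f (p.1, p.2 + 1) := by
      intro p
      simp only [f, c, ascPochhammer_succ_eval, mul_smul_comm, smul_smul]
      congr 2
      · push_cast; ring
      · rw [Nat.cast_succ, sub_add_eq_sub_sub]
    have hcons : ∀ p : ℕ × ℕ, c p.2 • (ncE (p.1 + 1) (x :: xs) * A (n - p.2)) =
        f (p.1 + 1, p.2) + c p.2 • (ncE p.1 xs * x * A (n - p.2)) := fun p ↦ by
      simp only [f, ncE, add_mul, smul_add]
    calc A n * (x :: xs).reverse.prod = (A n * xs.reverse.prod) * x := by
          rw [List.reverse_cons, List.prod_append, List.prod_singleton, mul_assoc]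
      _ = ∑ p ∈ antidiagonal xs.length, (c p.2 • (ncE p.1 xs * x * A (n - p.2)) +
            f (p.1, p.2 + 1)) := by
          rw [ih fun y hy ↦ hL y (List.mem_cons_of_mem x hy), sum_mul]
          refine sum_congr rfl fun p _ ↦ ?_
          rw [← hlower, smul_mul_assoc, mul_assoc, hx, mul_add, smul_add, mul_assoc]
      _ = ∑ p ∈ antidiagonal (x :: xs).length,
            c p.2 • (ncE p.1 (x :: xs) * A (n - p.2)) := by
          rw [sum_add_distrib, hshift, List.length_cons, sum_antidiagonal_succ]
          simp only [hcons, sum_add_distrib]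
          simp only [f, ncE]
          abel

end ModeExpansion

/-- The mode computation underlying the proof of Theorem 4.4: if
`A_n ∘ r_i − r_i ∘ A_n = −(n+1) A_{n-1}` for all `n ∈ ℤ`, `i = 1, …, N`, and
`A_n v = 0` for `n ≥ 0`, then for `1 ≤ m ≤ N+1`,
`A_{N-m}(r_N ⋯ r_1 v) = (-1)^{N-m+1} (N-m+1)! e_{m-1}(r_1, …, r_N)(A_{-1} v)`. -/
theorem stmt7 {M : Type*} [AddCommGroup M] [Module ℂ M] (N : ℕ)
    (A : ℤ → Module.End ℂ M) (r : Fin N → Module.End ℂ M)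
    (hcomm : ∀ (n : ℤ) (i : Fin N),
      A n * r i - r i * A n = (-((n : ℂ) + 1)) • A (n - 1))
    (v : M) (hv : ∀ n : ℤ, 0 ≤ n → A n v = 0)
    (m : ℕ) (hm1 : 1 ≤ m) (hm : m ≤ N + 1) :
    A ((N : ℤ) - (m : ℤ)) (((List.ofFn r).reverse).prod v)
      = ((-1 : ℂ) ^ (N + 1 - m) * (Nat.factorial (N + 1 - m) : ℂ)) •
          (ncE (m - 1) (List.ofFn r)) (A (-1) v) := by
  have hL : ∀ x ∈ List.ofFn r, ∀ k : ℤ,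
      A k * x - x * A k = (-((k : ℂ) + 1)) • A (k - 1) := by
    simp only [List.mem_ofFn, forall_exists_index, forall_apply_eq_imp_iff]
    exact fun i k ↦ hcomm k i
  have hneg : -((((N : ℤ) - m : ℤ) : ℂ) + 1) = -((N + 1 - m : ℕ) : ℂ) := by
    push_cast [Nat.cast_sub hm]; ring
  rw [← Module.End.mul_apply, mul_prod_reverse_eq_sum_antidiagonal A _ hL, LinearMap.sum_apply,
    List.length_ofFn, hneg, sum_eq_single (m - 1, N + 1 - m)]
  · have hidx : (N : ℤ) - m - (N + 1 - m : ℕ) = -1 := by omega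
    rw [hidx, ascPochhammer_eval_neg_eq_descPochhammer, descPochhammer_eval_eq_descFactorial,
      Nat.descFactorial_self]
    rfl
  · rintro ⟨j, d⟩ hjd hne
    simp only [HasAntidiagonal.mem_antidiagonal, ne_eq, Prod.mk.injEq] at hjd hne
    obtain hd | hd | hd := lt_trichotomy d (N + 1 - m)
    · simp [hv _ (by omega : 0 ≤ (N : ℤ) - m - d)]
    · omega
    · simp [ascPochhammer_eval_neg_coe_nat_of_lt hd]
  · simp only [HasAntidiagonal.mem_antidiagonal]
    omega
end
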